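/- Let F(θ,r,z) and G(θ,r,z) be trigonometric polynomial perturbations as in the discontinuous system, with f₁(r,z) = ∫₀^π F₁(θ,r,z) dθ + ∫_π^{2π} G₁(θ,r,z) dθ. Then f₁(r,z) = Σ_{i odd} r^{i+j} z^k (a_{ijk} + (-1)^j α_{ijk}) I_{(i+1,j)} + Σ_{i even} r^{i+j} z^k (b_{ijk} - (-1)^j β_{ijk}) I_{(i,j+1)}, where I_{(p,q)} = ∫₀^π cos^p θ sin^q θ dθ. -/

import Mathlib

/-!
Expand both integrals term by term. The substitution θ ↦ θ + π turns `cos ^ p * sin ^ q` on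
`[π, 2π]` into `(-1) ^ (p + q)` times itself on `[0, π]`, and the reflection θ ↦ π - θ shows that
`I_{(p,q)}` vanishes for odd `p`. So for each index exactly one of the two monomials survives,
according to the parity of the exponent of `cos`.
-/

open Real

/-- I_{(p,q)} = ∫₀^π cos^p θ sin^q θ dθ. -/
noncomputable def Ipq (p q : ℕ) : ℝ :=
  ∫ θ in (0:ℝ)..π, Real.cos θ ^ p * Real.sin θ ^ q

/-- The index set of triples (i, j, k) with i + j + |k| ≤ n. -/
def idx (n d : ℕ) : Finset (ℕ × ℕ × (Fin d → ℕ)) :=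
  ((Finset.range (n + 1)) ×ˢ (Finset.range (n + 1)) ×ˢ
      (Fintype.piFinset fun _ : Fin d => Finset.range (n + 1))).filter
    (fun x => x.1 + x.2.1 + ∑ l, x.2.2 l ≤ n)

lemma Ipq_eq_zero_of_odd {p : ℕ} (hp : Odd p) (q : ℕ) : Ipq p q = 0 := by
  have h : Ipq p q = -Ipq p q :=
    calc Ipq p q = ∫ θ in (0:ℝ)..π, cos (π - θ) ^ p * sin (π - θ) ^ q := by
          rw [intervalIntegral.integral_comp_sub_left (fun θ => cos θ ^ p * sin θ ^ q)]
          simp [Ipq]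
      _ = ∫ θ in (0:ℝ)..π, -(cos θ ^ p * sin θ ^ q) := by
          simp only [cos_pi_sub, sin_pi_sub, hp.neg_pow, neg_mul]
      _ = -Ipq p q := intervalIntegral.integral_neg
  linarith

lemma integral_pi_two_pi_cos_pow_mul_sin_pow (p q : ℕ) :
    ∫ θ in π..(2 * π), cos θ ^ p * sin θ ^ q = (-1) ^ (p + q) * Ipq p q := by
  calc ∫ θ in π..(2 * π), cos θ ^ p * sin θ ^ q
      = ∫ θ in (0:ℝ)..π, cos (θ + π) ^ p * sin (θ + π) ^ q := by
        rw [intervalIntegral.integral_comp_add_right (fun θ => cos θ ^ p * sin θ ^ q),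
          zero_add, two_mul]
    _ = ∫ θ in (0:ℝ)..π, (-1) ^ (p + q) * (cos θ ^ p * sin θ ^ q) := by
        congr 1 with θ
        rw [cos_add_pi, sin_add_pi, neg_pow, neg_pow (sin θ), pow_add]
        ring
    _ = (-1) ^ (p + q) * Ipq p q := intervalIntegral.integral_const_mul _ _

lemma integral_const_mul_cos_sin_pair (c A B u v : ℝ) (p q : ℕ) :
    ∫ θ in u..v, c * (A * cos θ ^ (p + 1) * sin θ ^ q + B * cos θ ^ p * sin θ ^ (q + 1))
      = c * A * (∫ θ in u..v, cos θ ^ (p + 1) * sin θ ^ q)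
        + c * B * ∫ θ in u..v, cos θ ^ p * sin θ ^ (q + 1) := by
  rw [← intervalIntegral.integral_const_mul, ← intervalIntegral.integral_const_mul,
    ← intervalIntegral.integral_add
      ((Continuous.intervalIntegrable (by fun_prop) u v))
      ((Continuous.intervalIntegrable (by fun_prop) u v))]
  congr 1 with θ
  ring

lemma integral_cos_sin_pair_zero_two_pi (c A B C D : ℝ) (p q : ℕ) :
    (∫ θ in (0:ℝ)..π, c * (A * cos θ ^ (p + 1) * sin θ ^ q + B * cos θ ^ p * sin θ ^ (q + 1)))
      + ∫ θ in π..(2 * π),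
          c * (C * cos θ ^ (p + 1) * sin θ ^ q + D * cos θ ^ p * sin θ ^ (q + 1))
      = (if Odd p then c * (A + (-1) ^ q * C) * Ipq (p + 1) q else 0)
        + if Even p then c * (B - (-1) ^ q * D) * Ipq p (q + 1) else 0 := by
  simp only [integral_const_mul_cos_sin_pair, integral_pi_two_pi_cos_pow_mul_sin_pow]
  change c * A * Ipq (p + 1) q + c * B * Ipq p (q + 1) + _ = _
  rcases Nat.even_or_odd p with hp | hp
  · have hsign : (-1 : ℝ) ^ (p + (q + 1)) = -(-1) ^ q := by
      rw [pow_add, hp.neg_one_pow, pow_succ]; ring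
    rw [if_neg (Nat.not_odd_iff_even.2 hp), if_pos hp, hsign, Ipq_eq_zero_of_odd hp.add_one]
    ring
  · have hsign : (-1 : ℝ) ^ (p + 1 + q) = (-1) ^ q := by
      rw [pow_add, pow_succ, hp.neg_one_pow]; ring
    rw [if_pos hp, if_neg (Nat.not_even_iff_odd.2 hp), hsign, Ipq_eq_zero_of_odd hp]
    ring

theorem averaged_function_f1_discontinuous_general (n d : ℕ)
    (a b α β : ℕ × ℕ × (Fin d → ℕ) → ℝ) (r : ℝ) (z : Fin d → ℝ) :
    (∫ θ in (0:ℝ)..π, ∑ x ∈ idx n d,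
        r ^ (x.1 + x.2.1) * (∏ l, z l ^ x.2.2 l) *
          (a x * Real.cos θ ^ (x.1 + 1) * Real.sin θ ^ x.2.1 +
           b x * Real.cos θ ^ x.1 * Real.sin θ ^ (x.2.1 + 1)))
    + (∫ θ in π..(2 * π), ∑ x ∈ idx n d,
        r ^ (x.1 + x.2.1) * (∏ l, z l ^ x.2.2 l) *
          (α x * Real.cos θ ^ (x.1 + 1) * Real.sin θ ^ x.2.1 +
           β x * Real.cos θ ^ x.1 * Real.sin θ ^ (x.2.1 + 1)))
    = (∑ x ∈ (idx n d).filter (fun x => Odd x.1),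
         r ^ (x.1 + x.2.1) * (∏ l, z l ^ x.2.2 l) *
           (a x + (-1 : ℝ) ^ x.2.1 * α x) * Ipq (x.1 + 1) x.2.1)
    + (∑ x ∈ (idx n d).filter (fun x => Even x.1),
         r ^ (x.1 + x.2.1) * (∏ l, z l ^ x.2.2 l) *
           (b x - (-1 : ℝ) ^ x.2.1 * β x) * Ipq x.1 (x.2.1 + 1)) := by
  rw [intervalIntegral.integral_finsetSum
      fun _ _ => Continuous.intervalIntegrable (by fun_prop) _ _,
    intervalIntegral.integral_finsetSum
      fun _ _ => Continuous.intervalIntegrable (by fun_prop) _ _,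
    Finset.sum_filter, Finset.sum_filter, ← Finset.sum_add_distrib, ← Finset.sum_add_distrib]
  exact Finset.sum_congr rfl fun x _ => integral_cos_sin_pair_zero_two_pi _ _ _ _ _ _ _

theorem averaged_function_f1_discontinuous (n d : ℕ)
    (a b α β : ℕ × ℕ × (Fin d → ℕ) → ℝ) (r : ℝ) (hr : 0 < r) (z : Fin d → ℝ) :
    (∫ θ in (0:ℝ)..π, ∑ x ∈ idx n d,
        r ^ (x.1 + x.2.1) * (∏ l, z l ^ x.2.2 l) *
          (a x * Real.cos θ ^ (x.1 + 1) * Real.sin θ ^ x.2.1 +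
           b x * Real.cos θ ^ x.1 * Real.sin θ ^ (x.2.1 + 1)))
    + (∫ θ in π..(2 * π), ∑ x ∈ idx n d,
        r ^ (x.1 + x.2.1) * (∏ l, z l ^ x.2.2 l) *
          (α x * Real.cos θ ^ (x.1 + 1) * Real.sin θ ^ x.2.1 +
           β x * Real.cos θ ^ x.1 * Real.sin θ ^ (x.2.1 + 1)))
    = (∑ x ∈ (idx n d).filter (fun x => Odd x.1),
         r ^ (x.1 + x.2.1) * (∏ l, z l ^ x.2.2 l) *
           (a x + (-1 : ℝ) ^ x.2.1 * α x) * Ipq (x.1 + 1) x.2.1)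
    + (∑ x ∈ (idx n d).filter (fun x => Even x.1),
         r ^ (x.1 + x.2.1) * (∏ l, z l ^ x.2.2 l) *
           (b x - (-1 : ℝ) ^ x.2.1 * β x) * Ipq x.1 (x.2.1 + 1)) :=
  averaged_function_f1_discontinuous_general n d a b α β r z
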